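/- If a real polynomial P(x) = \sum_{i=0}^n b_i x^i has all coefficients b_i > 0 and satisfies b_i^2 > 4 b_{i-1} b_{i+1} for all 1 \le i \le n-1, then all roots of P are real and distinct. -/

import Mathlib

/-!
Write `b_i` for the coefficients and fix `1 ≤ k ≤ n`. At `c = 2 b_{k-1} / b_k` the moduli
`t_i = b_i c^i` of the terms of `P(-c)` increase up to `i = k` and decrease after it, because the
ratios `b_{i-1} / b_i` grow by a factor of more than `4` at each step. Moreover
`t_{k-1} = t_k / 2`, and `t_{k+1} < t_k / 2` is exactly `b_k^2 > 4 b_{k-1} b_{k+1}`. An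
alternating sum of a monotone run of nonnegative terms is bounded by its largest term, so the
alternating sums flanking the peak term `t_k` are at most `t_{k-1}` and `t_{k+1}`, and
`(-1)^k P(-c) > 0`. Hence the points `0 > -2 b_0 / b_1 > ⋯ > -2 b_{n-1} / b_n` alternate in sign
under `P`, and the intermediate value theorem gives a root in each of the `n` gaps.
-/

open Finset Polynomial

theorem Antitone.alternating_sum_range_mem_Icc {a : ℕ → ℝ} (ha : Antitone a)
    (h0 : ∀ i, 0 ≤ a i) (m : ℕ) :
    ∑ i ∈ range m, (-1) ^ i * a i ∈ Set.Icc 0 (a 0) := by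
  induction m generalizing a with
  | zero => simpa using h0 0
  | succ m ih =>
    have hpeel : ∑ i ∈ range (m + 1), (-1) ^ i * a i
        = a 0 - ∑ i ∈ range m, (-1) ^ i * a (i + 1) := by
      simp only [sum_range_succ', pow_succ, mul_neg_one, neg_mul, sum_neg_distrib]
      ring
    obtain ⟨hlo, hhi⟩ := ih (fun i j hij ↦ ha (by omega : i + 1 ≤ j + 1)) fun i ↦ h0 _
    have ha01 : a 1 ≤ a 0 := ha zero_le_one
    rw [hpeel]
    constructor <;> linarith

theorem neg_one_pow_mul_alternating_sum_range_mem_Icc {a : ℕ → ℝ} {k : ℕ}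
    (ha : ∀ i < k, a i ≤ a (i + 1)) (h0 : 0 ≤ a 0) :
    (-1) ^ k * ∑ i ∈ range (k + 1), (-1) ^ i * a i ∈ Set.Icc 0 (a k) := by
  induction k with
  | zero => simpa using h0
  | succ k ih =>
    obtain ⟨hlo, hhi⟩ := ih fun i hi ↦ ha i (by omega)
    have hpeel : (-1) ^ (k + 1) * ∑ i ∈ range (k + 2), (-1) ^ i * a i
        = a (k + 1) - (-1) ^ k * ∑ i ∈ range (k + 1), (-1) ^ i * a i := by
      rw [sum_range_succ _ (k + 1), mul_add, ← mul_assoc, ← pow_add, ← two_mul, pow_mul]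
      simp only [pow_succ]
      ring
    have hak := ha k (by omega)
    rw [hpeel]
    constructor <;> linarith

theorem neg_one_pow_mul_alternating_sum_range_pos {t : ℕ → ℝ} {k m : ℕ} (hkm : k + 1 < m)
    (h0 : ∀ i, 0 ≤ t i) (hup : ∀ i ≤ k, t i ≤ t (i + 1))
    (hdown : ∀ i, k + 1 ≤ i → t (i + 1) ≤ t i) (hpeak : t k + t (k + 2) < t (k + 1)) :
    0 < (-1) ^ (k + 1) * ∑ i ∈ range m, (-1) ^ i * t i := by
  obtain ⟨l, rfl⟩ : ∃ l, m = k + 2 + l := ⟨m - (k + 2), by omega⟩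
  have hhead := (neg_one_pow_mul_alternating_sum_range_mem_Icc (a := t) (k := k)
    (fun i hi ↦ hup i hi.le) (h0 0)).2
  have htail := (Antitone.alternating_sum_range_mem_Icc (a := fun j ↦ t (k + 2 + j))
    (antitone_nat_of_succ_le fun j ↦ hdown (k + 2 + j) (by omega)) (fun j ↦ h0 _) l).2
  simp only [add_zero] at htail
  have hs : ((-1 : ℝ) ^ k) * (-1) ^ k = 1 := by rw [← mul_pow]; norm_num
  have hsplit : (-1) ^ (k + 1) * ∑ i ∈ range (k + 2 + l), (-1) ^ i * t i
      = t (k + 1) - (-1) ^ k * ∑ i ∈ range (k + 1), (-1) ^ i * t i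
        - ∑ j ∈ range l, (-1) ^ j * t (k + 2 + j) := by
    rw [sum_range_add, sum_range_succ]
    simp only [pow_add, mul_assoc, ← mul_sum]
    linear_combination (t (k + 1) - ∑ j ∈ range l, (-1) ^ j * t (k + 2 + j)) * hs
  rw [hsplit]
  linarith

theorem exists_mem_Ioo_eq_zero_of_mul_neg {f : ℝ → ℝ} {a b : ℝ} (hab : a ≤ b)
    (hf : ContinuousOn f (Set.Icc a b)) (h : f a * f b < 0) : ∃ c ∈ Set.Ioo a b, f c = 0 := by
  rcases mul_neg_iff.1 h with ⟨ha, hb⟩ | ⟨ha, hb⟩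
  · exact intermediate_value_Ioo' hab hf ⟨hb, ha⟩
  · exact intermediate_value_Ioo hab hf ⟨ha, hb⟩

theorem exists_finset_card_eq_of_alternating_signs {f : ℝ → ℝ} (hf : Continuous f) {x : ℕ → ℝ}
    {n : ℕ} (hx : ∀ k < n, x (k + 1) < x k) (hsign : ∀ k ≤ n, 0 < (-1) ^ k * f (x k)) :
    ∃ s : Finset ℝ, s.card = n ∧ ∀ y ∈ s, x n < y ∧ f y = 0 := by
  induction n with
  | zero => exact ⟨∅, rfl, by simp⟩
  | succ n ih =>
    obtain ⟨s, hcard, hs⟩ := ih (fun k hk ↦ hx k (by omega)) fun k hk ↦ hsign k (by omega)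
    have hxn := hx n (by omega)
    have hopp : f (x (n + 1)) * f (x n) < 0 := by
      have h := mul_pos (hsign n (by omega)) (hsign (n + 1) le_rfl)
      rw [mul_mul_mul_comm, ← pow_add, Odd.neg_one_pow ⟨n, by ring⟩] at h
      linarith
    obtain ⟨y, ⟨hy1, hy2⟩, hy⟩ := exists_mem_Ioo_eq_zero_of_mul_neg hxn.le hf.continuousOn hopp
    refine ⟨insert y s, ?_, ?_⟩
    · rw [card_insert_of_notMem fun hmem ↦ (hs y hmem).1.not_gt hy2, hcard]
    · simp only [mem_insert, forall_eq_or_imp]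
      exact ⟨⟨hy1, hy⟩, fun z hz ↦ ⟨hxn.trans (hs z hz).1, (hs z hz).2⟩⟩

theorem four_mul_div_lt_div_of_sq {b : ℕ → ℝ} {k : ℕ} (h1 : 0 < b (k + 1)) (h2 : 0 < b (k + 2))
    (hsq : 4 * b k * b (k + 2) < b (k + 1) ^ 2) :
    4 * (b k / b (k + 1)) < b (k + 1) / b (k + 2) := by
  rw [← mul_div_assoc, div_lt_div_iff₀ h1 h2]
  linarith

theorem monotoneOn_div_succ_of_sq {b : ℕ → ℝ} {n : ℕ} (hpos : ∀ i ≤ n, 0 < b i)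
    (hsq : ∀ k < n, 4 * b k * b (k + 2) < b (k + 1) ^ 2) :
    MonotoneOn (fun i ↦ b i / b (i + 1)) (Set.Iio n) := by
  refine monotoneOn_of_le_add_one Set.ordConnected_Iio fun i _ _ hi ↦ ?_
  have hi : i + 1 < n := hi
  have hr : 0 < b i / b (i + 1) := div_pos (hpos i (by omega)) (hpos _ (by omega))
  have := four_mul_div_lt_div_of_sq (hpos _ (by omega)) (hpos _ (by omega)) (hsq i (by omega))
  linarith

theorem neg_one_pow_mul_eval_neg_two_mul_div_pos {P : ℝ[X]} {n k : ℕ} (hdeg : P.natDegree ≤ n)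
    (hpos : ∀ i ≤ n, 0 < P.coeff i)
    (hsq : ∀ k < n, 4 * P.coeff k * P.coeff (k + 2) < P.coeff (k + 1) ^ 2) (hk : k < n) :
    0 < (-1) ^ (k + 1) * P.eval (-(2 * (P.coeff k / P.coeff (k + 1)))) := by
  set b := P.coeff
  set c := 2 * (b k / b (k + 1))
  have hbk : 0 < b k := hpos k (by omega)
  have hbk1 : 0 < b (k + 1) := hpos (k + 1) hk
  have hc : 0 < c := by positivity
  have hb0 : ∀ i, 0 ≤ b i := fun i ↦ (le_or_gt i n).elim (fun hi ↦ (hpos i hi).le)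
    fun hi ↦ (coeff_eq_zero_of_natDegree_lt (hdeg.trans_lt hi)).ge
  have hmono := monotoneOn_div_succ_of_sq hpos hsq
  have hbc : b (k + 1) * c = 2 * b k := by simp only [c]; field_simp
  have heval : P.eval (-c) = ∑ i ∈ range (n + 1), (-1) ^ i * (b i * c ^ i) := by
    rw [eval_eq_sum_range' (n := n + 1) (by omega)]
    exact sum_congr rfl fun i _ ↦ by rw [neg_pow]; ring
  rw [heval]
  refine neg_one_pow_mul_alternating_sum_range_pos (t := fun i ↦ b i * c ^ i) (by omega)
    (fun i ↦ mul_nonneg (hb0 i) (pow_nonneg hc.le i)) (fun i hi ↦ ?_) (fun i hi ↦ ?_) ?_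
  · have hbi1 : 0 < b (i + 1) := hpos _ (by omega)
    have hr : b i / b (i + 1) ≤ c := (hmono (by simp; omega) (by simpa using hk) hi).trans
      (by simp only [c]; linarith [div_pos hbk hbk1])
    calc b i * c ^ i ≤ (c * b (i + 1)) * c ^ i := by gcongr; exact (div_le_iff₀ hbi1).1 hr
      _ = b (i + 1) * c ^ (i + 1) := by ring
  · rcases lt_or_ge i n with hin | hin
    · have hbi1 : 0 < b (i + 1) := hpos _ hin
      have hjump := four_mul_div_lt_div_of_sq hbk1 (hpos _ (by omega)) (hsq k hk)
      have hr : c ≤ b i / b (i + 1) := by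
        have := hmono (by simpa using (by omega : k + 1 < n)) (by simpa using hin) hi
        simp only [c]
        linarith [div_pos hbk hbk1]
      calc b (i + 1) * c ^ (i + 1) = (c * b (i + 1)) * c ^ i := by ring
        _ ≤ b i * c ^ i := by gcongr; exact (le_div_iff₀ hbi1).1 hr
    · rw [show b (i + 1) = 0 from coeff_eq_zero_of_natDegree_lt (by omega), zero_mul]
      exact mul_nonneg (hb0 i) (pow_nonneg hc.le i)
  · have hquad : b (k + 2) * c ^ 2 < b k := by
      have h : b (k + 2) * c ^ 2 * b (k + 1) ^ 2 < b k * b (k + 1) ^ 2 :=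
        calc b (k + 2) * c ^ 2 * b (k + 1) ^ 2 = b k * (4 * b k * b (k + 2)) := by
              linear_combination (b (k + 2) * (b (k + 1) * c + 2 * b k)) * hbc
          _ < b k * b (k + 1) ^ 2 := by gcongr; exact hsq k hk
      exact lt_of_mul_lt_mul_right h (sq_nonneg _)
    calc b k * c ^ k + b (k + 2) * c ^ (k + 2) = c ^ k * (b k + b (k + 2) * c ^ 2) := by ring
      _ < c ^ k * (2 * b k) := by gcongr; linarith
      _ = b (k + 1) * c ^ (k + 1) := by rw [← hbc]; ring

noncomputable def kurtzPoint (P : ℝ[X]) : ℕ → ℝ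
  | 0 => 0
  | k + 1 => -(2 * (P.coeff k / P.coeff (k + 1)))

theorem kurtzPoint_succ_lt {P : ℝ[X]} {n k : ℕ} (hpos : ∀ i ≤ n, 0 < P.coeff i)
    (hsq : ∀ k < n, 4 * P.coeff k * P.coeff (k + 2) < P.coeff (k + 1) ^ 2) (hk : k < n) :
    kurtzPoint P (k + 1) < kurtzPoint P k := by
  rcases k with _ | k
  · have := div_pos (hpos 0 (by omega)) (hpos 1 hk)
    simp only [kurtzPoint]
    linarith
  · have := four_mul_div_lt_div_of_sq (hpos _ (by omega)) (hpos _ hk) (hsq k (by omega))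
    have := div_pos (hpos k (by omega)) (hpos (k + 1) (by omega))
    simp only [kurtzPoint]
    linarith

theorem neg_one_pow_mul_eval_kurtzPoint_pos {P : ℝ[X]} {n k : ℕ} (hdeg : P.natDegree ≤ n)
    (hpos : ∀ i ≤ n, 0 < P.coeff i)
    (hsq : ∀ k < n, 4 * P.coeff k * P.coeff (k + 2) < P.coeff (k + 1) ^ 2) (hk : k ≤ n) :
    0 < (-1) ^ k * P.eval (kurtzPoint P k) := by
  rcases k with _ | k
  · simpa [kurtzPoint, ← coeff_zero_eq_eval_zero] using hpos 0 hk
  · exact neg_one_pow_mul_eval_neg_two_mul_div_pos hdeg hpos hsq hk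

theorem kurtz_real_roots_general (n : ℕ) (P : Polynomial ℝ)
    (hdeg : P.natDegree = n)
    (hpos : ∀ i ≤ n, 0 < P.coeff i)
    (hineq : ∀ i, 1 ≤ i → i ≤ n - 1 →
      4 * P.coeff (i - 1) * P.coeff (i + 1) < (P.coeff i) ^ 2) :
    ∃ s : Finset ℝ, s.card = n ∧ ∀ x ∈ s, P.IsRoot x := by
  have hsq : ∀ k < n, 4 * P.coeff k * P.coeff (k + 2) < P.coeff (k + 1) ^ 2 := by
    intro k hk
    rcases lt_or_eq_of_le (Nat.succ_le_of_lt hk) with hk | rfl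
    · simpa using hineq (k + 1) (by omega) (by omega)
    · rw [coeff_eq_zero_of_natDegree_lt (n := k + 2) (by omega), mul_zero]
      exact pow_pos (hpos _ le_rfl) 2
  obtain ⟨s, hcard, hs⟩ := exists_finset_card_eq_of_alternating_signs P.continuous
    (fun k hk ↦ kurtzPoint_succ_lt hpos hsq hk)
    (fun k hk ↦ neg_one_pow_mul_eval_kurtzPoint_pos hdeg.le hpos hsq hk)
  exact ⟨s, hcard, fun y hy ↦ (hs y hy).2⟩

/-- Kurtz's theorem: a real polynomial of degree `n ≥ 1` with positive
coefficients satisfying `b_i^2 > 4 b_{i-1} b_{i+1}` for `1 ≤ i ≤ n-1`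
has `n` distinct real roots (hence all roots are real and distinct). -/
theorem kurtz_real_roots (n : ℕ) (hn : 1 ≤ n) (P : Polynomial ℝ)
    (hdeg : P.natDegree = n)
    (hpos : ∀ i ≤ n, 0 < P.coeff i)
    (hineq : ∀ i, 1 ≤ i → i ≤ n - 1 →
      4 * P.coeff (i - 1) * P.coeff (i + 1) < (P.coeff i) ^ 2) :
    ∃ s : Finset ℝ, s.card = n ∧ ∀ x ∈ s, P.IsRoot x :=
  kurtz_real_roots_general n P hdeg hpos hineq
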